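/- Let C be a right Hopf-Galois co-object over a Hopf algebra H with antipode S and cotranslation map τ. Then Σ τ(b⊗c₁) S(τ(c₃⊗c₂)) = S(τ(c⊗b)) for all b,c ∈ C. -/

import Mathlib

open Coalgebra TensorProduct

universe u v w

/-- The canonical map `C ⊗ H → C ⊗ C`, `c ⊗ h ↦ Σ c₁ ⊗ c₂·h`, for a right action
`act` of `H` on `C`. -/
noncomputable def canMap {F : Type u} {C : Type v} {H : Type w} [Field F]
    [AddCommGroup C] [Module F C] [Coalgebra F C] [AddCommGroup H] [Module F H]
    (act : C →ₗ[F] H →ₗ[F] C) : C ⊗[F] H →ₗ[F] C ⊗[F] C :=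
  (LinearMap.lTensor C (TensorProduct.lift act)) ∘ₗ
    (TensorProduct.assoc F C C H).toLinearMap ∘ₗ
    (LinearMap.rTensor H (comul (R := F)))

/-- The cotranslation map `τ = (ε ⊗ id) ∘ can⁻¹ : C ⊗ C → H`, where `inv` is the
inverse of the canonical map. -/
noncomputable def cotr {F : Type u} {C : Type v} {H : Type w} [Field F]
    [AddCommGroup C] [Module F C] [Coalgebra F C] [AddCommGroup H] [Module F H]
    (inv : C ⊗[F] C →ₗ[F] C ⊗[F] H) : C ⊗[F] C →ₗ[F] H :=
  (TensorProduct.lid F H).toLinearMap ∘ₗ (LinearMap.rTensor H (counit (R := F))) ∘ₗ inv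

/-!
Three identities for the cotranslation map do the work: `τ(x ⊗ y·h) = τ(x ⊗ y) h`,
`Σ x₁·τ(x₂ ⊗ y) = ε(x) y`, and `Δ τ(x ⊗ y) = Σ τ(x₂ ⊗ y₁) ⊗ τ(x₁ ⊗ y₂)`. Each is transported
from an identity for `can` through `can⁻¹`; for the last one the iterated canonical map
`c ⊗ h ⊗ k ↦ Σ c₁ ⊗ c₂·h ⊗ c₃·k` intertwines `id ⊗ Δ_H` with `id ⊗ Δ_C`, because `C` is an
`H`-module coalgebra. The first two give `Σ τ(x ⊗ y₁) τ(y₂ ⊗ z) = ε(y) τ(x ⊗ z)`, the third makes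
`S ∘ τ` a convolution inverse of `τ`: `Σ τ(x₂ ⊗ y₁) S(τ(x₁ ⊗ y₂)) = ε(x) ε(y)`. Expanding
`S(τ(c ⊗ b))` by the convolution-inverse identity and contracting the resulting pair
`S(τ(b₂ ⊗ c₂)) S(τ(c₃ ⊗ b₁)) = S(τ(c₃ ⊗ b₁) τ(b₂ ⊗ c₂))` with the first one gives the identity.
-/

section CoalgebraSums

variable {R A M : Type*} [CommSemiring R] [AddCommMonoid A] [Module R A] [Coalgebra R A]
  [AddCommMonoid M] [Module R M] {a : A} {ι : Type*}

lemma sum_counit_smul_map (φ : A →ₗ[R] M) (𝓡 : Repr R a ι) :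
    ∑ i ∈ 𝓡.index, counit (R := R) (𝓡.left i) • φ (𝓡.right i) = φ a := by
  conv_rhs => rw [← Coalgebra.sum_counit_smul 𝓡]
  simp only [map_sum, map_smul]

lemma sum_smul_counit_map (φ : A →ₗ[R] M) (𝓡 : Repr R a ι) :
    ∑ i ∈ 𝓡.index, counit (R := R) (𝓡.right i) • φ (𝓡.left i) = φ a := by
  simpa only [map_sum, TensorProduct.rid_tmul, map_smul, one_smul] using
    congr(φ (TensorProduct.rid R A $(sum_tmul_counit_eq (R := R) 𝓡)))

lemma sum_coassoc_apply (Ψ : A ⊗[R] (A ⊗[R] A) →ₗ[R] M) (𝓡 : Repr R a ι) {κ Λ : ι → Type*}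
    (𝓡₁ : ∀ i, Repr R (𝓡.left i) (κ i)) (𝓡₂ : ∀ i, Repr R (𝓡.right i) (Λ i)) :
    ∑ i ∈ 𝓡.index, ∑ j ∈ (𝓡₁ i).index, Ψ ((𝓡₁ i).left j ⊗ₜ ((𝓡₁ i).right j ⊗ₜ 𝓡.right i)) =
      ∑ i ∈ 𝓡.index, ∑ j ∈ (𝓡₂ i).index, Ψ (𝓡.left i ⊗ₜ ((𝓡₂ i).left j ⊗ₜ (𝓡₂ i).right j)) := by
  simpa only [map_sum] using congr(Ψ $(sum_tmul_tmul_eq 𝓡 𝓡₁ 𝓡₂))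

variable (R A M) in
lemma lTensor_lid_rTensor_counit_comp_assoc_comp_rTensor_comul :
    LinearMap.lTensor A ((TensorProduct.lid R M).toLinearMap ∘ₗ LinearMap.rTensor M counit) ∘ₗ
      ((TensorProduct.assoc R A A M).toLinearMap ∘ₗ LinearMap.rTensor M comul) =
        LinearMap.id := by
  ext a m
  simpa [← (ℛ R a).eq, sum_tmul] using
    sum_smul_counit_map ((TensorProduct.mk R A M).flip m) (ℛ R a)

end CoalgebraSums


namespace LinearMap

variable {R M N M' N' : Type*} [CommSemiring R] [AddCommMonoid M] [AddCommMonoid N]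
  [AddCommMonoid M'] [AddCommMonoid N'] [Module R M] [Module R N] [Module R M'] [Module R N']

lemma comp_eq_comp_of_comp_eq {e : M →ₗ[R] N} {e' : N →ₗ[R] M} {d : M' →ₗ[R] N'}
    {d' : N' →ₗ[R] M'} (he : e ∘ₗ e' = id) (hd : d' ∘ₗ d = id) {f : M →ₗ[R] M'}
    {g : N →ₗ[R] N'} (h : g ∘ₗ e = d ∘ₗ f) : f ∘ₗ e' = d' ∘ₗ g := by
  rw [← id_comp (f ∘ₗ e'), ← hd, comp_assoc, ← comp_assoc e' f d, ← h, comp_assoc e' e g, he,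
    comp_id]

end LinearMap

section CanonicalMap

variable {F : Type u} {C : Type v} {H : Type w} [Field F]
  [AddCommGroup C] [Module F C] [Coalgebra F C] [AddCommGroup H] [Module F H]
  (act : C →ₗ[F] H →ₗ[F] C)

lemma canMap_tmul (c : C) (h : H) {ι : Type*} (𝓡 : Repr F c ι) :
    canMap act (c ⊗ₜ h) = ∑ i ∈ 𝓡.index, 𝓡.left i ⊗ₜ act (𝓡.right i) h := by
  simp [canMap, ← 𝓡.eq, sum_tmul]

lemma lid_rTensor_counit_comp_canMap :
    (TensorProduct.lid F C).toLinearMap ∘ₗ LinearMap.rTensor C counit ∘ₗ canMap act =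
      lift act := by
  ext c h
  simpa [canMap_tmul act c h (ℛ F c)] using sum_counit_smul_map (act.flip h) (ℛ F c)

lemma canMap_colinear :
    ((TensorProduct.assoc F C C C).toLinearMap ∘ₗ LinearMap.rTensor C comul) ∘ₗ canMap act =
      LinearMap.lTensor C (canMap act) ∘ₗ
        ((TensorProduct.assoc F C C H).toLinearMap ∘ₗ LinearMap.rTensor H comul) := by
  ext c h
  have := sum_map_tmul_tmul_eq (R := F) (LinearMap.id : C →ₗ[F] C) LinearMap.id (act.flip h) c
    (repr := ℛ F c) (a₁ := fun i => ℛ F _) (a₂ := fun i => ℛ F _)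
  simp only [LinearMap.id_apply, LinearMap.flip_apply] at this
  simpa [canMap_tmul act _ h (ℛ F _), ← (ℛ F _).eq, sum_tmul, tmul_sum] using this.symm

end CanonicalMap

section CanonicalInverse

variable {F : Type u} {C : Type v} {H : Type w} [Field F]
  [AddCommGroup C] [Module F C] [Coalgebra F C] [AddCommGroup H] [Module F H]
  {act : C →ₗ[F] H →ₗ[F] C} {inv : C ⊗[F] C →ₗ[F] C ⊗[F] H}

lemma inv_colinear (hinv₁ : canMap act ∘ₗ inv = LinearMap.id)
    (hinv₂ : inv ∘ₗ canMap act = LinearMap.id) :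
    ((TensorProduct.assoc F C C H).toLinearMap ∘ₗ LinearMap.rTensor H comul) ∘ₗ inv =
      LinearMap.lTensor C inv ∘ₗ
        ((TensorProduct.assoc F C C C).toLinearMap ∘ₗ LinearMap.rTensor C comul) :=
  LinearMap.comp_eq_comp_of_comp_eq hinv₁
    (by rw [← LinearMap.lTensor_comp, hinv₂, LinearMap.lTensor_id]) (canMap_colinear act)

lemma inv_eq_lTensor_cotr (hinv₁ : canMap act ∘ₗ inv = LinearMap.id)
    (hinv₂ : inv ∘ₗ canMap act = LinearMap.id) :
    inv = LinearMap.lTensor C (cotr inv) ∘ₗ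
      ((TensorProduct.assoc F C C C).toLinearMap ∘ₗ LinearMap.rTensor C comul) := by
  conv_lhs =>
    rw [← LinearMap.id_comp inv,
      ← lTensor_lid_rTensor_counit_comp_assoc_comp_rTensor_comul F C H, LinearMap.comp_assoc,
      inv_colinear hinv₁ hinv₂, ← LinearMap.comp_assoc, ← LinearMap.lTensor_comp]
  rfl

lemma inv_tmul (hinv₁ : canMap act ∘ₗ inv = LinearMap.id)
    (hinv₂ : inv ∘ₗ canMap act = LinearMap.id) (x y : C) {ι : Type*} (𝓡 : Repr F x ι) :
    inv (x ⊗ₜ y) = ∑ i ∈ 𝓡.index, 𝓡.left i ⊗ₜ cotr inv (𝓡.right i ⊗ₜ y) := by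
  rw [LinearMap.congr_fun (inv_eq_lTensor_cotr hinv₁ hinv₂) (x ⊗ₜ y)]
  simp [← 𝓡.eq, sum_tmul]

end CanonicalInverse

section CotranslationMap

variable {F : Type u} {C : Type v} {H : Type w} [Field F]
  [AddCommGroup C] [Module F C] [Coalgebra F C]

section Module

variable [AddCommGroup H] [Module F H] {act : C →ₗ[F] H →ₗ[F] C}
  {inv : C ⊗[F] C →ₗ[F] C ⊗[F] H}

lemma lift_comp_inv (hinv₁ : canMap act ∘ₗ inv = LinearMap.id) :
    lift act ∘ₗ inv = (TensorProduct.lid F C).toLinearMap ∘ₗ LinearMap.rTensor C counit := by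
  rw [← lid_rTensor_counit_comp_canMap, LinearMap.comp_assoc, LinearMap.comp_assoc, hinv₁,
    LinearMap.comp_id]

lemma sum_act_cotr (hinv₁ : canMap act ∘ₗ inv = LinearMap.id)
    (hinv₂ : inv ∘ₗ canMap act = LinearMap.id) (x y : C) {ι : Type*} (𝓡 : Repr F x ι) :
    ∑ i ∈ 𝓡.index, act (𝓡.left i) (cotr inv (𝓡.right i ⊗ₜ y)) = counit (R := F) x • y := by
  simpa [inv_tmul hinv₁ hinv₂ x y 𝓡] using LinearMap.congr_fun (lift_comp_inv hinv₁) (x ⊗ₜ y)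

lemma counit_cotr [Coalgebra F H]
    (hact_counit : ∀ (c : C) (h : H),
      counit (R := F) (act c h) = counit (R := F) c * counit (R := F) h)
    (hinv₁ : canMap act ∘ₗ inv = LinearMap.id)
    (hinv₂ : inv ∘ₗ canMap act = LinearMap.id) (x y : C) :
    counit (R := F) (cotr inv (x ⊗ₜ y)) = counit (R := F) x * counit (R := F) y := by
  calc counit (R := F) (cotr inv (x ⊗ₜ y))
      = ∑ i ∈ (ℛ F x).index, counit (R := F) (act ((ℛ F x).left i)
          (cotr inv ((ℛ F x).right i ⊗ₜ y))) := by
        simpa [hact_counit] using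
          (sum_counit_smul_map (counit ∘ₗ cotr inv ∘ₗ (TensorProduct.mk F C C).flip y)
            (ℛ F x)).symm
    _ = counit (R := F) x * counit (R := F) y := by
        rw [← map_sum, sum_act_cotr hinv₁ hinv₂, map_smul, smul_eq_mul]

end Module

section Algebra

variable [Ring H] [Algebra F H] {act : C →ₗ[F] H →ₗ[F] C} {inv : C ⊗[F] C →ₗ[F] C ⊗[F] H}

lemma lTensor_act_comp_canMap
    (hact_mul : ∀ (c : C) (h k : H), act (act c h) k = act c (h * k)) (h : H) :
    LinearMap.lTensor C (act.flip h) ∘ₗ canMap act =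
      canMap act ∘ₗ LinearMap.lTensor C (LinearMap.mulRight F h) := by
  ext c k
  simp [canMap_tmul act _ _ (ℛ F c), hact_mul]

lemma cotr_tmul_act (hact_mul : ∀ (c : C) (h k : H), act (act c h) k = act c (h * k))
    (hinv₁ : canMap act ∘ₗ inv = LinearMap.id)
    (hinv₂ : inv ∘ₗ canMap act = LinearMap.id) (x y : C) (h : H) :
    cotr inv (x ⊗ₜ act y h) = cotr inv (x ⊗ₜ y) * h := by
  have := LinearMap.congr_fun
    (LinearMap.comp_eq_comp_of_comp_eq hinv₁ hinv₂ (lTensor_act_comp_canMap hact_mul h)) (x ⊗ₜ y)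
  simp only [LinearMap.comp_apply, LinearMap.lTensor_tmul, LinearMap.flip_apply] at this
  calc cotr inv (x ⊗ₜ act y h)
      = (TensorProduct.lid F H) (LinearMap.rTensor H counit
          (LinearMap.lTensor C (LinearMap.mulRight F h) (inv (x ⊗ₜ y)))) := by
        rw [this]; rfl
    _ = cotr inv (x ⊗ₜ y) * h := by
        simpa [inv_tmul hinv₁ hinv₂ x y (ℛ F x), Finset.sum_mul, smul_mul_assoc] using
          congr($(sum_counit_smul_map (cotr inv ∘ₗ (TensorProduct.mk F C C).flip y) (ℛ F x)) * h)

lemma sum_cotr_mul_cotr (hact_mul : ∀ (c : C) (h k : H), act (act c h) k = act c (h * k))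
    (hinv₁ : canMap act ∘ₗ inv = LinearMap.id)
    (hinv₂ : inv ∘ₗ canMap act = LinearMap.id) (x y z : C) {ι : Type*} (𝓡 : Repr F y ι) :
    ∑ i ∈ 𝓡.index, cotr inv (x ⊗ₜ 𝓡.left i) * cotr inv (𝓡.right i ⊗ₜ z) =
      counit (R := F) y • cotr inv (x ⊗ₜ z) := by
  simpa [tmul_sum, cotr_tmul_act hact_mul hinv₁ hinv₂] using
    congr(cotr inv (x ⊗ₜ $(sum_act_cotr hinv₁ hinv₂ y z 𝓡)))

end Algebra

end CotranslationMap

section Comultiplication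

variable {F : Type u} {C : Type v} {H : Type w} [Field F]
  [AddCommGroup C] [Module F C] [Coalgebra F C] [AddCommGroup H] [Module F H]
  {act : C →ₗ[F] H →ₗ[F] C} {inv : C ⊗[F] C →ₗ[F] C ⊗[F] H}

/-- `c ⊗ (h ⊗ k) ↦ Σ c₁ ⊗ (c₂·h ⊗ c₃·k)` -/
noncomputable def canMap₂ (hinv₁ : canMap act ∘ₗ inv = LinearMap.id)
    (hinv₂ : inv ∘ₗ canMap act = LinearMap.id) : C ⊗[F] (H ⊗[F] H) ≃ₗ[F] C ⊗[F] (C ⊗[F] C) :=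
  let can := LinearEquiv.ofLinearMap (canMap act) inv hinv₁ hinv₂
  (TensorProduct.assoc F C H H).symm ≪≫ₗ TensorProduct.rightComm F C H H ≪≫ₗ
    LinearEquiv.rTensor H can ≪≫ₗ TensorProduct.rightComm F C C H ≪≫ₗ
    LinearEquiv.rTensor C can ≪≫ₗ TensorProduct.assoc F C C C

lemma canMap₂_tmul (hinv₁ : canMap act ∘ₗ inv = LinearMap.id)
    (hinv₂ : inv ∘ₗ canMap act = LinearMap.id) (c : C) (h k : H) {ι : Type*} (𝓡 : Repr F c ι)
    {κ : ι → Type*} (𝓡₁ : ∀ i, Repr F (𝓡.left i) (κ i)) :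
    canMap₂ hinv₁ hinv₂ (c ⊗ₜ (h ⊗ₜ k)) = ∑ i ∈ 𝓡.index, ∑ j ∈ (𝓡₁ i).index,
      (𝓡₁ i).left j ⊗ₜ (act ((𝓡₁ i).right j) h ⊗ₜ act (𝓡.right i) k) := by
  simp [canMap₂, canMap_tmul act c k 𝓡, canMap_tmul act _ h (𝓡₁ _), sum_tmul]

lemma canMap₂_symm_tmul (hinv₁ : canMap act ∘ₗ inv = LinearMap.id)
    (hinv₂ : inv ∘ₗ canMap act = LinearMap.id) (x y z : C) {ι : Type*} (𝓡 : Repr F x ι)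
    {κ : ι → Type*} (𝓡₁ : ∀ i, Repr F (𝓡.left i) (κ i)) :
    (canMap₂ hinv₁ hinv₂).symm (x ⊗ₜ (y ⊗ₜ z)) = ∑ i ∈ 𝓡.index, ∑ j ∈ (𝓡₁ i).index,
      (𝓡₁ i).left j ⊗ₜ (cotr inv (𝓡.right i ⊗ₜ y) ⊗ₜ cotr inv ((𝓡₁ i).right j ⊗ₜ z)) := by
  simp [canMap₂, inv_tmul hinv₁ hinv₂ x y 𝓡, inv_tmul hinv₁ hinv₂ _ z (𝓡₁ _), sum_tmul]

variable [Coalgebra F H]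

lemma canMap₂_comp_lTensor_comul
    (hact_comul : ∀ (c : C) (h : H) (ι : Type v) (rc : Coalgebra.Repr F c ι)
      (ι' : Type w) (rh : Coalgebra.Repr F h ι'),
      comul (R := F) (act c h) = ∑ i ∈ rc.index, ∑ j ∈ rh.index,
        act (rc.left i) (rh.left j) ⊗ₜ[F] act (rc.right i) (rh.right j))
    (hinv₁ : canMap act ∘ₗ inv = LinearMap.id) (hinv₂ : inv ∘ₗ canMap act = LinearMap.id) :
    LinearMap.lTensor C comul ∘ₗ canMap act =
      (canMap₂ hinv₁ hinv₂).toLinearMap ∘ₗ LinearMap.lTensor C comul := by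
  ext c h
  simp only [TensorProduct.AlgebraTensorModule.curry_apply, curry_apply,
    LinearMap.coe_restrictScalars, LinearMap.comp_apply, LinearMap.lTensor_tmul,
    LinearEquiv.coe_coe, canMap_tmul act c h (ℛ F c), map_sum,
    hact_comul _ h _ (ℛ F _) _ (ℛ F h), ← (ℛ F h).eq, tmul_sum,
    canMap₂_tmul hinv₁ hinv₂ c _ _ (ℛ F c) (fun i => ℛ F _)]
  conv_lhs => enter [2, i]; rw [Finset.sum_comm]
  rw [Finset.sum_comm]
  refine Finset.sum_congr rfl fun a _ => ?_
  simpa using sum_map_tmul_tmul_eq (R := F) (LinearMap.id : C →ₗ[F] C)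
    (act.flip ((ℛ F h).left a)) (act.flip ((ℛ F h).right a)) c (repr := ℛ F c)
    (a₁ := fun i => ℛ F _) (a₂ := fun i => ℛ F _)

lemma comul_cotr
    (hact_comul : ∀ (c : C) (h : H) (ι : Type v) (rc : Coalgebra.Repr F c ι)
      (ι' : Type w) (rh : Coalgebra.Repr F h ι'),
      comul (R := F) (act c h) = ∑ i ∈ rc.index, ∑ j ∈ rh.index,
        act (rc.left i) (rh.left j) ⊗ₜ[F] act (rc.right i) (rh.right j))
    (hinv₁ : canMap act ∘ₗ inv = LinearMap.id) (hinv₂ : inv ∘ₗ canMap act = LinearMap.id)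
    (x y : C) {ι ι' : Type*} (𝓡x : Repr F x ι) (𝓡y : Repr F y ι') :
    comul (R := F) (cotr inv (x ⊗ₜ y)) = ∑ i ∈ 𝓡x.index, ∑ j ∈ 𝓡y.index,
      cotr inv (𝓡x.right i ⊗ₜ 𝓡y.left j) ⊗ₜ cotr inv (𝓡x.left i ⊗ₜ 𝓡y.right j) := by
  have hcomm := LinearMap.comp_eq_comp_of_comp_eq hinv₁ (canMap₂ hinv₁ hinv₂).symm_comp
    (canMap₂_comp_lTensor_comul hact_comul hinv₁ hinv₂)
  have := congr((TensorProduct.lid F (H ⊗[F] H)) (LinearMap.rTensor _ counit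
    $(LinearMap.congr_fun hcomm (x ⊗ₜ y))))
  simp only [LinearMap.coe_comp, Function.comp_apply, inv_tmul hinv₁ hinv₂ x y 𝓡x, map_sum,
    LinearMap.lTensor_tmul, LinearMap.rTensor_tmul, TensorProduct.lid_tmul, LinearEquiv.coe_coe,
    ← 𝓡y.eq, tmul_sum, canMap₂_symm_tmul hinv₁ hinv₂ x _ _ 𝓡x (fun i => ℛ F _)] at this
  have hx := sum_counit_smul_map (comul ∘ₗ cotr inv ∘ₗ (TensorProduct.mk F C C).flip y) 𝓡x
  simp only [LinearMap.comp_apply, LinearMap.flip_apply, TensorProduct.mk_apply] at hx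
  rw [← hx, this, Finset.sum_comm]
  refine Finset.sum_congr rfl fun i _ => Finset.sum_congr rfl fun j _ => ?_
  simpa using sum_counit_smul_map (TensorProduct.mk F H H (cotr inv (𝓡x.right i ⊗ₜ 𝓡y.left j))
    ∘ₗ cotr inv ∘ₗ (TensorProduct.mk F C C).flip (𝓡y.right j)) (ℛ F (𝓡x.left i))

end Comultiplication

section Antipode

variable {F : Type u} {C : Type v} {H : Type w} [Field F]
  [AddCommGroup C] [Module F C] [Coalgebra F C] [Ring H] [HopfAlgebra F H]
  {act : C →ₗ[F] H →ₗ[F] C} {inv : C ⊗[F] C →ₗ[F] C ⊗[F] H}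

local notation "S" => HopfAlgebra.antipode F
local notation "τ" => cotr inv

lemma sum_cotr_mul_antipode_cotr
    (hact_comul : ∀ (c : C) (h : H) (ι : Type v) (rc : Coalgebra.Repr F c ι)
      (ι' : Type w) (rh : Coalgebra.Repr F h ι'),
      comul (R := F) (act c h) = ∑ i ∈ rc.index, ∑ j ∈ rh.index,
        act (rc.left i) (rh.left j) ⊗ₜ[F] act (rc.right i) (rh.right j))
    (hact_counit : ∀ (c : C) (h : H),
      counit (R := F) (act c h) = counit (R := F) c * counit (R := F) h)
    (hinv₁ : canMap act ∘ₗ inv = LinearMap.id) (hinv₂ : inv ∘ₗ canMap act = LinearMap.id)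
    (x y : C) {ι ι' : Type*} (𝓡x : Repr F x ι) (𝓡y : Repr F y ι') :
    ∑ i ∈ 𝓡x.index, ∑ j ∈ 𝓡y.index,
      τ (𝓡x.right i ⊗ₜ 𝓡y.left j) * S (τ (𝓡x.left i ⊗ₜ 𝓡y.right j)) =
        (counit (R := F) x * counit (R := F) y) • 1 := by
  have := congr(LinearMap.mul' F H (LinearMap.lTensor H S
    $(comul_cotr hact_comul hinv₁ hinv₂ x y 𝓡x 𝓡y)))
  rw [HopfAlgebra.mul_antipode_lTensor_comul_apply, counit_cotr hact_counit hinv₁ hinv₂,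
    Algebra.algebraMap_eq_smul_one] at this
  simpa using this.symm

lemma sum_antipode_cotr_mul_antipode_cotr
    (hact_mul : ∀ (c : C) (h k : H), act (act c h) k = act c (h * k))
    (hinv₁ : canMap act ∘ₗ inv = LinearMap.id) (hinv₂ : inv ∘ₗ canMap act = LinearMap.id)
    (x y z : C) {ι : Type*} (𝓡 : Repr F y ι) :
    ∑ i ∈ 𝓡.index, S (τ (𝓡.right i ⊗ₜ z)) * S (τ (x ⊗ₜ 𝓡.left i)) =
      counit (R := F) y • S (τ (x ⊗ₜ z)) := by
  simp only [← HopfAlgebra.antipode_mul_antidistrib, ← map_sum,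
    sum_cotr_mul_cotr hact_mul hinv₁ hinv₂, map_smul]

lemma sum_cotr_mul_antipode_cotr_swap_eq (b c : C) {ι : Type*} (𝓡 : Repr F c ι)
    {κ Λ : ι → Type*} (𝓡₁ : ∀ j, Repr F (𝓡.left j) (κ j)) (𝓡₂ : ∀ j, Repr F (𝓡.right j) (Λ j)) :
    ∑ j ∈ 𝓡.index, ∑ k ∈ (𝓡₂ j).index,
      τ (b ⊗ₜ 𝓡.left j) * S (τ ((𝓡₂ j).right k ⊗ₜ (𝓡₂ j).left k)) =
    ∑ j ∈ 𝓡.index, ∑ q ∈ (𝓡₁ j).index,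
      τ (b ⊗ₜ (𝓡₁ j).left q) * S (τ (𝓡.right j ⊗ₜ (𝓡₁ j).right q)) := by
  simpa using (sum_coassoc_apply (LinearMap.mul' F H ∘ₗ
    TensorProduct.map (τ ∘ₗ TensorProduct.mk F C C b)
      (S ∘ₗ τ ∘ₗ (TensorProduct.comm F C C).toLinearMap)) 𝓡 𝓡₁ 𝓡₂).symm

lemma cotr_mul_antipode_cotr_eq_sum
    (hact_mul : ∀ (c : C) (h k : H), act (act c h) k = act c (h * k))
    (hinv₁ : canMap act ∘ₗ inv = LinearMap.id) (hinv₂ : inv ∘ₗ canMap act = LinearMap.id)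
    (b x y z : C) {ι : Type*} (𝓡 : Repr F b ι) {κ : ι → Type*}
    (𝓡₂ : ∀ i, Repr F (𝓡.right i) (κ i)) :
    τ (b ⊗ₜ x) * S (τ (y ⊗ₜ z)) = ∑ i ∈ 𝓡.index, ∑ p ∈ (𝓡₂ i).index,
      τ ((𝓡₂ i).right p ⊗ₜ x) * S (τ ((𝓡₂ i).left p ⊗ₜ z)) * S (τ (y ⊗ₜ 𝓡.left i)) := by
  have hb := sum_counit_smul_map (τ ∘ₗ (TensorProduct.mk F C C).flip x) 𝓡
  simp only [LinearMap.comp_apply, LinearMap.flip_apply, TensorProduct.mk_apply] at hb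
  have hsplit : ∀ i, τ (𝓡.right i ⊗ₜ x) * (counit (R := F) (𝓡.left i) • S (τ (y ⊗ₜ z))) =
      ∑ p ∈ (ℛ F (𝓡.left i)).index, τ (𝓡.right i ⊗ₜ x) *
        S (τ ((ℛ F (𝓡.left i)).right p ⊗ₜ z)) * S (τ (y ⊗ₜ (ℛ F (𝓡.left i)).left p)) := by
    intro i
    simp only [mul_assoc, ← Finset.mul_sum,
      sum_antipode_cotr_mul_antipode_cotr hact_mul hinv₁ hinv₂ y _ z (ℛ F _)]
  rw [← hb, Finset.sum_mul]
  simp only [smul_mul_assoc, ← mul_smul_comm, hsplit]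
  simpa using sum_coassoc_apply (LinearMap.mul' F H ∘ₗ (TensorProduct.comm F H H).toLinearMap ∘ₗ
    TensorProduct.map (S ∘ₗ τ ∘ₗ TensorProduct.mk F C C y)
      (LinearMap.mul' F H ∘ₗ (TensorProduct.comm F H H).toLinearMap ∘ₗ
        TensorProduct.map (S ∘ₗ τ ∘ₗ (TensorProduct.mk F C C).flip z)
          (τ ∘ₗ (TensorProduct.mk F C C).flip x))) 𝓡 (fun i => ℛ F _) 𝓡₂

lemma antipode_cotr_eq_sum
    (hact_comul : ∀ (c : C) (h : H) (ι : Type v) (rc : Coalgebra.Repr F c ι)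
      (ι' : Type w) (rh : Coalgebra.Repr F h ι'),
      comul (R := F) (act c h) = ∑ i ∈ rc.index, ∑ j ∈ rh.index,
        act (rc.left i) (rh.left j) ⊗ₜ[F] act (rc.right i) (rh.right j))
    (hact_counit : ∀ (c : C) (h : H),
      counit (R := F) (act c h) = counit (R := F) c * counit (R := F) h)
    (hinv₁ : canMap act ∘ₗ inv = LinearMap.id) (hinv₂ : inv ∘ₗ canMap act = LinearMap.id)
    (b c : C) {ι ι' : Type*} (𝓡b : Repr F b ι) (𝓡c : Repr F c ι') {κ : ι → Type*}
    {κ' : ι' → Type*} (𝓡b₂ : ∀ i, Repr F (𝓡b.right i) (κ i))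
    (𝓡c₁ : ∀ j, Repr F (𝓡c.left j) (κ' j)) :
    S (τ (c ⊗ₜ b)) = ∑ j ∈ 𝓡c.index, ∑ q ∈ (𝓡c₁ j).index, ∑ i ∈ 𝓡b.index, ∑ p ∈ (𝓡b₂ i).index,
      τ ((𝓡b₂ i).right p ⊗ₜ (𝓡c₁ j).left q) * S (τ ((𝓡b₂ i).left p ⊗ₜ (𝓡c₁ j).right q)) *
        S (τ (𝓡c.right j ⊗ₜ 𝓡b.left i)) := by
  have hb := sum_smul_counit_map (S ∘ₗ τ ∘ₗ TensorProduct.mk F C C c) 𝓡b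
  have hc : ∀ i, S (τ (c ⊗ₜ 𝓡b.left i)) = ∑ j ∈ 𝓡c.index,
      counit (R := F) (𝓡c.left j) • S (τ (𝓡c.right j ⊗ₜ 𝓡b.left i)) := fun i => by
    simpa using
      (sum_counit_smul_map (S ∘ₗ τ ∘ₗ (TensorProduct.mk F C C).flip (𝓡b.left i)) 𝓡c).symm
  simp only [LinearMap.comp_apply, TensorProduct.mk_apply, hc, Finset.smul_sum, smul_smul] at hb
  rw [← hb, Finset.sum_comm]
  refine Finset.sum_congr rfl fun j _ => ?_
  simp only [← Finset.sum_mul,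
    sum_cotr_mul_antipode_cotr hact_comul hact_counit hinv₁ hinv₂ _ _ (𝓡b₂ _) (𝓡c₁ j),
    smul_one_mul, Finset.sum_comm (s := (𝓡c₁ j).index)]

end Antipode

theorem cotr_twist_general {F : Type u} {C : Type v} {H : Type w} [Field F]
    [AddCommGroup C] [Module F C] [Coalgebra F C] [Ring H] [HopfAlgebra F H]
    (act : C →ₗ[F] H →ₗ[F] C)
    (hact_mul : ∀ (c : C) (h k : H), act (act c h) k = act c (h * k))
    (hact_comul : ∀ (c : C) (h : H) (ι : Type v) (rc : Coalgebra.Repr F c ι)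
      (ι' : Type w) (rh : Coalgebra.Repr F h ι'),
      comul (R := F) (act c h) = ∑ i ∈ rc.index, ∑ j ∈ rh.index,
        act (rc.left i) (rh.left j) ⊗ₜ[F] act (rc.right i) (rh.right j))
    (hact_counit : ∀ (c : C) (h : H),
      counit (R := F) (act c h) = counit (R := F) c * counit (R := F) h)
    (inv : C ⊗[F] C →ₗ[F] C ⊗[F] H)
    (hinv₁ : canMap act ∘ₗ inv = LinearMap.id)
    (hinv₂ : inv ∘ₗ canMap act = LinearMap.id)
    :
    ∀ (b c : C) (ι : Type v) (rc : Coalgebra.Repr F c ι)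
      (κ : ι → Type v) (rcc : ∀ j, Coalgebra.Repr F (rc.right j) (κ j)),
      ∑ j ∈ rc.index, ∑ k ∈ (rcc j).index,
        cotr inv (b ⊗ₜ[F] rc.left j) *
          HopfAlgebra.antipode (R := F) (cotr inv ((rcc j).right k ⊗ₜ[F] (rcc j).left k))
        = HopfAlgebra.antipode (R := F) (cotr inv (c ⊗ₜ[F] b)) := by
  intro b c ι rc κ rcc
  rw [sum_cotr_mul_antipode_cotr_swap_eq b c rc (fun j => ℛ F _) rcc,
    antipode_cotr_eq_sum hact_comul hact_counit hinv₁ hinv₂ b c (ℛ F b) rc (fun i => ℛ F _)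
      (fun j => ℛ F _)]
  exact Finset.sum_congr rfl fun j _ => Finset.sum_congr rfl fun q _ =>
    cotr_mul_antipode_cotr_eq_sum hact_mul hinv₁ hinv₂ b _ _ _ (ℛ F b) (fun i => ℛ F _)

/-- `Σ τ(b⊗c₁) S(τ(c₃⊗c₂)) = S(τ(c⊗b))`. -/
theorem cotr_twist {F : Type u} {C : Type v} {H : Type w} [Field F]
    [AddCommGroup C] [Module F C] [Coalgebra F C] [Ring H] [HopfAlgebra F H]
    (act : C →ₗ[F] H →ₗ[F] C)
    (hact_one : ∀ c : C, act c 1 = c)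
    (hact_mul : ∀ (c : C) (h k : H), act (act c h) k = act c (h * k))
    (hact_comul : ∀ (c : C) (h : H) (ι : Type v) (rc : Coalgebra.Repr F c ι)
      (ι' : Type w) (rh : Coalgebra.Repr F h ι'),
      comul (R := F) (act c h) = ∑ i ∈ rc.index, ∑ j ∈ rh.index,
        act (rc.left i) (rh.left j) ⊗ₜ[F] act (rc.right i) (rh.right j))
    (hact_counit : ∀ (c : C) (h : H),
      counit (R := F) (act c h) = counit (R := F) c * counit (R := F) h)
    (hker : LinearMap.ker (counit (R := F) : C →ₗ[F] F) =
      Submodule.span F {x : C | ∃ (c : C) (h : H), x = act c h - counit (R := F) h • c})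
    (inv : C ⊗[F] C →ₗ[F] C ⊗[F] H)
    (hinv₁ : canMap act ∘ₗ inv = LinearMap.id)
    (hinv₂ : inv ∘ₗ canMap act = LinearMap.id)
    :
    ∀ (b c : C) (ι : Type v) (rc : Coalgebra.Repr F c ι)
      (κ : ι → Type v) (rcc : ∀ j, Coalgebra.Repr F (rc.right j) (κ j)),
      ∑ j ∈ rc.index, ∑ k ∈ (rcc j).index,
        cotr inv (b ⊗ₜ[F] rc.left j) *
          HopfAlgebra.antipode (R := F) (cotr inv ((rcc j).right k ⊗ₜ[F] (rcc j).left k))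
        = HopfAlgebra.antipode (R := F) (cotr inv (c ⊗ₜ[F] b)) :=
  cotr_twist_general act hact_mul hact_comul hact_counit inv hinv₁ hinv₂
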